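/- arXiv:1611.03648 — 2 statements merged into one kernel-verified Lean document; each statement's English description precedes it below -/
import Mathlib

section
/- Let F be a maximum matching of G and K = E(G)\F. Among all Gallai–Edmonds decompositions (Q,R,S) of G with respect to F, choose one in which Q is maximal under containment. Then ER(K,F) = ⋃_{i∈I} V(H_i) and OR(K,F) = S ∪ ⋃_{i∈I}(V(H_i) \ {r_i}), where H_i are the components of G−S and r_i the vertices of H_i uncovered by F within H_i. -/
variable {V : Type*}

/-- A matching: a set of non-loop edges that are pairwise vertex-disjoint. -/
def IsMatching (M : Set (Sym2 V)) : Prop :=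
  (∀ e ∈ M, ¬ e.IsDiag) ∧ ∀ e ∈ M, ∀ f ∈ M, e ≠ f → ∀ v, v ∈ e → v ∉ f

/-- A vertex is covered by an edge set if it belongs to some edge. -/
def covered (M : Set (Sym2 V)) (v : V) : Prop := ∃ e ∈ M, v ∈ e

/-- A `K`–`F`-alternating path: a (simple) nonempty list of vertices whose
odd-numbered edges (0-indexed: even positions) lie in `K` and even-numbered edges lie in `F`. -/
def AltPath (K F : Set (Sym2 V)) (p : List V) : Prop :=
  p ≠ [] ∧ p.Nodup ∧ ∀ i, ∀ h : i + 1 < p.length,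
    s(p[i]'(Nat.lt_of_succ_lt h), p[i+1]'h) ∈ (if i % 2 = 0 then K else F)

/-- `x` is evenly `K`-reachable from `a`: there is a `K`–`F`-alternating path from `a` to `x`
with an even number of edges (an odd number of vertices); `x = a` via the empty path. -/
def evenReach (K F : Set (Sym2 V)) (a x : V) : Prop :=
  ∃ (p : List V) (hp : p ≠ []), AltPath K F p ∧ p.head hp = a ∧ p.getLast hp = x ∧
    Odd p.length

/-- `x` is oddly `K`-reachable from `a`: there is a `K`–`F`-alternating path from `a` to `x`
with an odd number of edges (an even, positive, number of vertices). -/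
def oddReach (K F : Set (Sym2 V)) (a x : V) : Prop :=
  ∃ (p : List V) (hp : p ≠ []), AltPath K F p ∧ p.head hp = a ∧ p.getLast hp = x ∧
    Even p.length

/-- A maximum matching of the graph with edge set `E`. -/
def IsMaxMatching (E F : Set (Sym2 V)) : Prop :=
  F ⊆ E ∧ IsMatching F ∧ ∀ M ⊆ E, IsMatching M → M.ncard ≤ F.ncard

/-- The edges of `F` contained in the vertex set `C` (the induced edge set `F[C]`). -/
def edgesIn (F : Set (Sym2 V)) (C : Set V) : Set (Sym2 V) := {e ∈ F | ∀ u ∈ e, u ∈ C}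

/-- The edges of `E` avoiding the vertex set `S` (edges of `G − S`). -/
def avoid (E : Set (Sym2 V)) (S : Set V) : Set (Sym2 V) := {e ∈ E | ∀ u ∈ e, u ∉ S}

/-- The connected component of `v` in the graph with edge set `E'`. -/
def comp (E' : Set (Sym2 V)) (v : V) : Set V :=
  {u | Relation.ReflTransGen (fun a b => s(a, b) ∈ E') v u}

/-- The induced subgraph on `C` is hypomatchable (factor-critical): for every `v ∈ C` there
is a matching inside `C` covering exactly `C \ {v}`. -/
def Hypomatchable (E : Set (Sym2 V)) (C : Set V) : Prop :=
  ∀ v ∈ C, ∃ M ⊆ edgesIn E C, IsMatching M ∧ ¬ covered M v ∧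
    ∀ u ∈ C, u ≠ v → covered M u

/-- A Gallai–Edmonds decomposition `(Q, R, S)` of the graph `E` with respect to the maximum
matching `F`: (1) `F[Q]` is a perfect matching of `Q`; (2) `R` is a union of connected
components of `G − S`, each hypomatchable and matched by `F` within itself except for exactly
one exposed vertex (its `r_i`); (3) every `s ∈ S` is matched by `F` to the exposed vertex
`r_i` of some component. -/
def IsGE (E F : Set (Sym2 V)) (Q R S : Set V) : Prop :=
  Q ∪ R ∪ S = Set.univ ∧ Disjoint Q R ∧ Disjoint Q S ∧ Disjoint R S ∧
  (∀ v ∈ Q, covered (edgesIn F Q) v) ∧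
  (∀ v ∈ R, comp (avoid E S) v ⊆ R ∧ Hypomatchable E (comp (avoid E S) v) ∧
    (∃! w, w ∈ comp (avoid E S) v ∧ ¬ covered (edgesIn F (comp (avoid E S) v)) w)) ∧
  (∀ s ∈ S, ∃ t, s(s, t) ∈ F ∧ t ∈ R ∧ ¬ covered (edgesIn F (comp (avoid E S) t)) t)

/-- `ER(K,F)`: the set of vertices evenly `K`-reachable from some `F`-uncovered vertex. -/
def ERset (K F : Set (Sym2 V)) : Set V := {x | ∃ a, ¬ covered F a ∧ evenReach K F a x}

/-- `OR(K,F)`: the set of vertices oddly `K`-reachable from some `F`-uncovered vertex. -/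
def ORset (K F : Set (Sym2 V)) : Set V := {x | ∃ a, ¬ covered F a ∧ oddReach K F a x}

/-!
Along an alternating path that starts at an `F`-exposed vertex, a Gallai–Edmonds decomposition
forces the vertices at even positions into `R` and those at odd positions into `S` or onto
`F[H_i]`-covered vertices of `R`; moreover the path can enter a component `H_i` of `G - S` only
through its exposed vertex `r_i`. This gives `ER ⊆ R` and `OR ⊆ S ∪ ⋃ (V(H_i) \ {r_i})` for every
decomposition.

Conversely, once `r_i` is reached the path can be continued inside `H_i` to any vertex `v`: if
`N` is a matching of `H_i` missing only `v`, a maximal `N`/`F`-alternating path from `r_i` must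
end at `v`. So the reached components and their partners in `S` form a Gallai–Edmonds
decomposition whose `Q` absorbs everything else; maximality of `Q` forces every component to be
reached, and the reverse inclusions follow.
-/

variable {K F M : Set (Sym2 V)} {p : List V}

theorem covered_iff_exists {v : V} : covered M v ↔ ∃ w, s(v, w) ∈ M :=
  ⟨fun ⟨_, he, hv⟩ => ⟨Sym2.Mem.other hv, by rwa [Sym2.other_spec]⟩,
    fun ⟨_, hw⟩ => ⟨_, hw, Sym2.mem_mk_left _ _⟩⟩

theorem covered_mono {N : Set (Sym2 V)} (h : M ⊆ N) {v : V} : covered M v → covered N v :=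
  fun ⟨e, he, hv⟩ => ⟨e, h he, hv⟩

theorem mem_edgesIn {C : Set V} {u w : V} :
    s(u, w) ∈ edgesIn M C ↔ s(u, w) ∈ M ∧ u ∈ C ∧ w ∈ C := by
  simp [edgesIn]

theorem edgesIn_subset (C : Set V) : edgesIn M C ⊆ M := fun _ he => he.1

theorem edgesIn_mono {C C' : Set V} (h : C ⊆ C') : edgesIn M C ⊆ edgesIn M C' :=
  fun _ he => ⟨he.1, fun u hu => h (he.2 u hu)⟩

namespace IsMatching

theorem subset {N : Set (Sym2 V)} (hM : IsMatching M) (h : N ⊆ M) : IsMatching N :=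
  ⟨fun e he => hM.1 e (h he), fun e he f hf => hM.2 e (h he) f (h hf)⟩

theorem ne_of_mem (hM : IsMatching M) {a b : V} (h : s(a, b) ∈ M) : a ≠ b :=
  fun hab => hM.1 _ h (Sym2.mk_isDiag_iff.2 hab)

theorem eq_of_mem (hM : IsMatching M) {a b c : V} (hb : s(a, b) ∈ M) (hc : s(a, c) ∈ M) :
    b = c := by
  by_contra hbc
  exact hM.2 _ hb _ hc (fun h => hbc (Sym2.congr_right.1 h)) a (Sym2.mem_mk_left a b)
    (Sym2.mem_mk_left a c)

end IsMatching

theorem mem_of_covered_edgesIn (hF : IsMatching F) {C : Set V} {v w : V}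
    (hv : covered (edgesIn F C) v) (hvw : s(v, w) ∈ F) : w ∈ C := by
  obtain ⟨w', hw'⟩ := covered_iff_exists.1 hv
  obtain rfl := hF.eq_of_mem (edgesIn_subset C hw') hvw
  exact (mem_edgesIn.1 hw').2.2

section Component

variable {E' E'' : Set (Sym2 V)} {u v w : V}

theorem mem_comp_self (E' : Set (Sym2 V)) (v : V) : v ∈ comp E' v := Relation.ReflTransGen.refl

theorem mem_comp_of_edge (hu : u ∈ comp E' v) (he : s(u, w) ∈ E') : w ∈ comp E' v := hu.tail he

theorem mem_comp_symm (hu : u ∈ comp E' v) : v ∈ comp E' u :=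
  Relation.reflTransGen_swap.1 <|
    Relation.ReflTransGen.mono (fun a b hab => by rwa [Function.swap, Sym2.eq_swap]) _ _ hu

theorem comp_eq_of_mem (hu : u ∈ comp E' v) : comp E' u = comp E' v :=
  Set.ext fun _ => ⟨fun hw => hu.trans hw, fun hw => (mem_comp_symm hu).trans hw⟩

theorem comp_mono (h : E' ⊆ E'') : comp E' v ⊆ comp E'' v :=
  fun _ hu => Relation.ReflTransGen.mono (fun _ _ hab => h hab) _ _ hu

theorem comp_subset_of_closed {C : Set V} (hv : v ∈ C)
    (hC : ∀ u ∈ C, ∀ w, s(u, w) ∈ E' → w ∈ C) : comp E' v ⊆ C := by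
  intro u hu
  induction hu with
  | refl => exact hv
  | tail _ he ih => exact hC _ ih _ he

end Component

namespace AltPath

theorem singleton (a : V) : AltPath K F [a] :=
  ⟨List.cons_ne_nil a [], List.nodup_singleton a, fun i h => by simp at h⟩

theorem getElem_inj (hp : AltPath K F p) {i j : ℕ} {hi : i < p.length} {hj : j < p.length}
    (h : p[i] = p[j]) : i = j :=
  hp.2.1.getElem_inj_iff.1 h

theorem edge_mem_of_even (hp : AltPath K F p) {i : ℕ} (h : i + 1 < p.length) (hi : Even i) :
    s(p[i], p[i + 1]) ∈ K := by
  simpa [Nat.even_iff.1 hi] using hp.2.2 i h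

theorem edge_mem_of_odd (hp : AltPath K F p) {i : ℕ} (h : i + 1 < p.length) (hi : Odd i) :
    s(p[i], p[i + 1]) ∈ F := by
  simpa [Nat.odd_iff.1 hi] using hp.2.2 i h

theorem mono {K' F' : Set (Sym2 V)} (hK : K ⊆ K') (hF : F ⊆ F') (hp : AltPath K F p) :
    AltPath K' F' p := by
  refine ⟨hp.1, hp.2.1, fun i h => ?_⟩
  rcases Nat.even_or_odd i with hi | hi
  · simpa [Nat.even_iff.1 hi] using hK (hp.edge_mem_of_even h hi)
  · simpa [Nat.odd_iff.1 hi] using hF (hp.edge_mem_of_odd h hi)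

theorem take (hp : AltPath K F p) {n : ℕ} (hn : n ≠ 0) : AltPath K F (p.take n) := by
  refine ⟨by simpa [hn] using hp.1, hp.2.1.sublist (List.take_sublist n p), fun i h => ?_⟩
  simp only [List.length_take] at h
  simpa using hp.2.2 i (by omega)

theorem exists_prefix (hp : AltPath K F p) {i : ℕ} (hi : i < p.length) :
    ∃ (q : List V) (hq : AltPath K F q), q.head hq.1 = p.head hp.1 ∧ q.getLast hq.1 = p[i] ∧
      q.length = i + 1 :=
  ⟨p.take (i + 1), hp.take (by omega), by simp [List.head_take],
    by simp [List.getLast_eq_getElem, show min (i + 1) p.length = i + 1 by omega], by simp; omega⟩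

theorem concat (hp : AltPath K F p) {y : V} (hy : y ∉ p)
    (he : s(p.getLast hp.1, y) ∈ if p.length % 2 = 1 then K else F) :
    AltPath K F (p ++ [y]) := by
  refine ⟨by simp, List.nodup_append.2 ⟨hp.2.1, List.nodup_singleton y, ?_⟩, fun i h => ?_⟩
  · simp only [List.mem_singleton]
    rintro x hx _ rfl rfl
    exact hy hx
  · simp only [List.length_append, List.length_singleton] at h
    rcases Nat.lt_or_ge (i + 1) p.length with hi | hi
    · simpa [List.getElem_append_left, hi, Nat.lt_of_succ_lt hi] using hp.2.2 i hi
    · have hpos := List.length_pos_iff.2 hp.1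
      obtain rfl : i = p.length - 1 := by omega
      have hmod : (p.length - 1) % 2 = 0 ↔ p.length % 2 = 1 := by omega
      rw [List.getElem_append_left (by omega)]
      simpa [List.getLast_eq_getElem, hmod, Nat.sub_add_cancel hpos] using he

theorem append (hp : AltPath K F p) (hodd : Odd p.length) {q : List V}
    (hq : AltPath K F (p.getLast hp.1 :: q)) (hd : ∀ x ∈ p, x ∉ q) : AltPath K F (p ++ q) := by
  obtain ⟨n, hn⟩ := hodd
  have key : ∀ j k (hjk : j = 2 * n + k) (hj : j < (p ++ q).length) (hk : k < q.length + 1),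
      (p ++ q)[j] = (p.getLast hp.1 :: q)[k] := by
    rintro j (_ | k) rfl hj hk
    · simp [List.getElem_append_left, List.getLast_eq_getElem, hn]
    · rw [List.getElem_append_right (by omega)]
      simp [hn, show 2 * n + (k + 1) - (2 * n + 1) = k by omega]
  refine ⟨by simp [hp.1], List.nodup_append.2 ⟨hp.2.1, (List.nodup_cons.1 hq.2.1).2,
    fun x hx y hy hxy => hd x hx (hxy ▸ hy)⟩, fun i h => ?_⟩
  simp only [List.length_append] at h
  rcases Nat.lt_or_ge (i + 1) p.length with hi | hi
  · simpa [List.getElem_append_left, hi, Nat.lt_of_succ_lt hi] using hp.2.2 i hi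
  · obtain ⟨k, rfl⟩ : ∃ k, i = 2 * n + k := ⟨i - 2 * n, by omega⟩
    have hk := hq.2.2 k (by simp; omega)
    rw [key _ k rfl _ (by omega), key _ (k + 1) (by omega) _ (by omega)]
    simpa [Nat.add_mod] using hk

theorem diff_of_not_covered (hF : IsMatching F) (hp : AltPath K F p)
    (ha : ¬ covered F (p.head hp.1)) : AltPath (K \ F) F p := by
  refine ⟨hp.1, hp.2.1, fun i h => ?_⟩
  rcases Nat.even_or_odd i with hi | hi
  · refine (if_pos (Nat.even_iff.1 hi)).symm ▸ ⟨hp.edge_mem_of_even h hi, fun hF' => ?_⟩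
    rcases i with _ | i
    · exact ha ⟨_, hF', by simp [List.head_eq_getElem]⟩
    · have hprev := hp.edge_mem_of_odd (i := i) (by omega) (by simpa [Nat.even_add_one] using hi)
      rw [Sym2.eq_swap] at hprev
      have := hp.getElem_inj (hF.eq_of_mem hprev hF')
      omega
  · simpa [Nat.odd_iff.1 hi] using hp.edge_mem_of_odd h hi

theorem notMem_of_getLast_edge_mem_left (hK : IsMatching K) (hp : AltPath K F p)
    (hodd : Odd p.length) {y : V} (hy : s(p.getLast hp.1, y) ∈ K) : y ∉ p := by
  intro hmem
  obtain ⟨j, hj, rfl⟩ := List.getElem_of_mem hmem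
  rw [List.getLast_eq_getElem, Sym2.eq_swap] at hy
  obtain ⟨n, hn⟩ := hodd
  rcases Nat.even_or_odd j with hje | hjo
  · by_cases hjL : j = p.length - 1
    · exact hK.ne_of_mem hy (by simp [hjL])
    · have := hp.getElem_inj (hK.eq_of_mem (hp.edge_mem_of_even (by omega) hje) hy)
      grind
  · obtain ⟨m, rfl⟩ := Nat.exists_eq_add_one_of_ne_zero (n := j) (by rintro rfl; simp at hjo)
    have hprev := hp.edge_mem_of_even (i := m) (by omega)
      (Nat.not_odd_iff_even.1 (Nat.odd_add_one.1 hjo))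
    rw [Sym2.eq_swap] at hprev
    have := hp.getElem_inj (hK.eq_of_mem hprev hy)
    omega

theorem notMem_of_getLast_edge_mem_right (hF : IsMatching F) (hp : AltPath K F p)
    (ha : ¬ covered F (p.head hp.1)) (heven : Even p.length) {y : V}
    (hy : s(p.getLast hp.1, y) ∈ F) : y ∉ p := by
  intro hmem
  obtain ⟨j, hj, rfl⟩ := List.getElem_of_mem hmem
  rw [List.getLast_eq_getElem, Sym2.eq_swap] at hy
  obtain ⟨n, hn⟩ := heven
  rcases j with _ | m
  · exact ha ⟨_, hy, by simp [List.head_eq_getElem]⟩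
  rcases Nat.even_or_odd m with hme | hmo
  · by_cases hjL : m + 1 = p.length - 1
    · exact hF.ne_of_mem hy (by simp [hjL])
    · have := hp.getElem_inj
        (hF.eq_of_mem (hp.edge_mem_of_odd (by omega) (Even.add_one hme)) hy)
      grind
  · have hprev := hp.edge_mem_of_odd (i := m) (by omega) hmo
    rw [Sym2.eq_swap] at hprev
    have := hp.getElem_inj (hF.eq_of_mem hprev hy)
    omega

theorem mem_of_head_mem {C : Set V} (hp : AltPath K F p) (hK : ∀ e ∈ K, ∀ u ∈ e, u ∈ C)
    (hF : ∀ e ∈ F, ∀ u ∈ e, u ∈ C) (h0 : p.head hp.1 ∈ C) {x : V} (hx : x ∈ p) : x ∈ C := by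
  obtain ⟨_ | i, hi, rfl⟩ := List.getElem_of_mem hx
  · rwa [List.head_eq_getElem] at h0
  · rcases Nat.even_or_odd i with hie | hio
    · exact hK _ (hp.edge_mem_of_even hi hie) _ (Sym2.mem_mk_right _ _)
    · exact hF _ (hp.edge_mem_of_odd hi hio) _ (Sym2.mem_mk_right _ _)

end AltPath

theorem mem_ERset_of_not_covered {a : V} (ha : ¬ covered F a) : a ∈ ERset K F :=
  ⟨a, ha, [a], List.cons_ne_nil a [], AltPath.singleton a, rfl, rfl, by simp⟩

theorem mem_ERset_of_getElem (hp : AltPath K F p) (ha : ¬ covered F (p.head hp.1)) {i : ℕ}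
    (hi : i < p.length) (he : Even i) : p[i] ∈ ERset K F := by
  obtain ⟨q, hq, h0, h1, h2⟩ := hp.exists_prefix hi
  exact ⟨_, ha, q, hq.1, hq, h0, h1, h2 ▸ he.add_one⟩

theorem mem_ORset_of_getElem (hp : AltPath K F p) (ha : ¬ covered F (p.head hp.1)) {i : ℕ}
    (hi : i < p.length) (ho : Odd i) : p[i] ∈ ORset K F := by
  obtain ⟨q, hq, h0, h1, h2⟩ := hp.exists_prefix hi
  exact ⟨_, ha, q, hq.1, hq, h0, h1, h2 ▸ ho.add_one⟩

theorem exists_altPath_of_mem_ERset {x : V} (hx : x ∈ ERset K F) :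
    ∃ p, ∃ hp : AltPath K F p, ¬ covered F (p.head hp.1) ∧ p.getLast hp.1 = x ∧ Odd p.length := by
  obtain ⟨_, ha, p, _, hp, rfl, rfl, hodd⟩ := hx
  exact ⟨p, hp, ha, rfl, hodd⟩

theorem exists_altPath_of_mem_ORset {x : V} (hx : x ∈ ORset K F) :
    ∃ p, ∃ hp : AltPath K F p, ¬ covered F (p.head hp.1) ∧ p.getLast hp.1 = x ∧
      Even p.length := by
  obtain ⟨_, ha, p, _, hp, rfl, rfl, heven⟩ := hx
  exact ⟨p, hp, ha, rfl, heven⟩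

theorem mem_ORset_of_getLast_edge (hp : AltPath K F p) (ha : ¬ covered F (p.head hp.1))
    (hodd : Odd p.length) {y : V} (hy : y ∉ p) (he : s(p.getLast hp.1, y) ∈ K) :
    y ∈ ORset K F :=
  ⟨_, ha, p ++ [y], by simp, hp.concat hy (by simpa [Nat.odd_iff.1 hodd] using he),
    List.head_append_of_ne_nil hp.1, by simp, by simpa using hodd.add_one⟩

theorem mem_ERset_of_getLast_edge (hp : AltPath K F p) (ha : ¬ covered F (p.head hp.1))
    (heven : Even p.length) {y : V} (hy : y ∉ p) (he : s(p.getLast hp.1, y) ∈ F) :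
    y ∈ ERset K F :=
  ⟨_, ha, p ++ [y], by simp, hp.concat hy (by simpa [Nat.even_iff.1 heven] using he),
    List.head_append_of_ne_nil hp.1, by simp, by simpa using heven.add_one⟩

theorem mem_ERset_of_mem_ORset (hF : IsMatching F) {s t : V} (hst : s(s, t) ∈ F)
    (hs : s ∈ ORset K F) : t ∈ ERset K F := by
  obtain ⟨p, hp, ha, rfl, heven⟩ := exists_altPath_of_mem_ORset hs
  exact mem_ERset_of_getLast_edge hp ha heven
    (hp.notMem_of_getLast_edge_mem_right hF ha heven hst) hst

theorem mem_ORset_of_mem_ERset (hF : IsMatching F) {s t : V} (hst : s(s, t) ∈ F)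
    (ht : t ∈ ERset K F) : s ∈ ORset K F := by
  obtain ⟨p, hp, ha, rfl, n, hn⟩ := exists_altPath_of_mem_ERset ht
  rcases n with _ | n
  · obtain ⟨x, rfl⟩ := List.length_eq_one_iff.1 hn
    exact absurd ⟨_, hst, by simp⟩ ha
  · have hprev := hp.edge_mem_of_odd (i := 2 * n + 1) (by omega) (by simp)
    rw [Sym2.eq_swap] at hst hprev
    have hL : p.length - 1 = 2 * n + 1 + 1 := by omega
    simp only [List.getLast_eq_getElem, hL] at hst
    obtain rfl := hF.eq_of_mem hprev hst
    exact mem_ORset_of_getElem hp ha _ (by simp)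

theorem mem_ERset_of_append (hp : AltPath K F p) (ha : ¬ covered F (p.head hp.1))
    (hodd : Odd p.length) {q : List V} (hq : AltPath K F (p.getLast hp.1 :: q))
    (hd : ∀ x ∈ p, x ∉ q) (hqeven : Even q.length) :
    (p.getLast hp.1 :: q).getLast (List.cons_ne_nil _ _) ∈ ERset K F := by
  have hpq := hp.append hodd hq hd
  have hpos := List.length_pos_iff.2 hp.1
  have hlast : (p ++ q)[p.length - 1 + q.length]'(by simp; omega) =
      (p.getLast hp.1 :: q).getLast (List.cons_ne_nil _ _) := by
    rcases q with _ | ⟨a, q⟩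
    · simp [List.getLast_eq_getElem]
    · rw [List.getLast_eq_getElem, List.getElem_append_right (by simp; omega)]
      simp only [List.length_cons, Nat.add_sub_cancel, List.getElem_cons_succ,
        show p.length - 1 + (q.length + 1) - p.length = q.length by omega]
  rw [← hlast]
  exact mem_ERset_of_getElem hpq (by rwa [List.head_append_of_ne_nil hp.1]) _ (by
    obtain ⟨n, hn⟩ := hodd; obtain ⟨m, hm⟩ := hqeven; exact ⟨n + m, by omega⟩)

theorem exists_altPath_getLast_not_covered [Finite V] (hK : IsMatching K) (hF : IsMatching F)
    {r : V} (hr : ¬ covered F r) :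
    ∃ p, ∃ hp : AltPath K F p, p.head hp.1 = r ∧
      (Odd p.length ∧ ¬ covered K (p.getLast hp.1) ∨
        Even p.length ∧ ¬ covered F (p.getLast hp.1)) := by
  have := Fintype.ofFinite V
  by_contra! hstuck
  have hlong : ∀ n, ∃ p, ∃ hp : AltPath K F p, p.head hp.1 = r ∧ n < p.length := by
    intro n
    induction n with
    | zero => exact ⟨[r], AltPath.singleton r, rfl, by simp⟩
    | succ n ih =>
      obtain ⟨p, hp, hpr, hn⟩ := ih
      obtain ⟨hextK, hextF⟩ := hstuck p hp hpr
      obtain ⟨y, hy, he⟩ : ∃ y ∉ p, s(p.getLast hp.1, y) ∈ if p.length % 2 = 1 then K else F := by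
        rcases Nat.even_or_odd p.length with heven | hodd
        · obtain ⟨y, hy⟩ := covered_iff_exists.1 (hextF heven)
          exact ⟨y, hp.notMem_of_getLast_edge_mem_right hF (hpr ▸ hr) heven hy,
            by simpa [Nat.even_iff.1 heven] using hy⟩
        · obtain ⟨y, hy⟩ := covered_iff_exists.1 (hextK hodd)
          exact ⟨y, hp.notMem_of_getLast_edge_mem_left hK hodd hy,
            by simpa [Nat.odd_iff.1 hodd] using hy⟩
      exact ⟨p ++ [y], hp.concat hy he, by rw [List.head_append_of_ne_nil hp.1, hpr],
        by simp; omega⟩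
  obtain ⟨p, hp, -, hlen⟩ := hlong (Fintype.card V)
  exact absurd hp.2.1.length_le_card (by omega)

theorem Hypomatchable.exists_altPath [Finite V] {E : Set (Sym2 V)} {C : Set V}
    (hC : Hypomatchable E C) (hF : IsMatching F) {r v : V} (hr : r ∈ C)
    (hrF : ¬ covered (edgesIn F C) r) (hcov : ∀ u ∈ C, u ≠ r → covered (edgesIn F C) u)
    (hv : v ∈ C) :
    ∃ p, ∃ hp : AltPath (E \ F) F p, p.head hp.1 = r ∧ p.getLast hp.1 = v ∧ Odd p.length ∧
      ∀ x ∈ p, x ∈ C := by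
  obtain ⟨N, hNC, hN, hvN, hNcov⟩ := hC v hv
  have hFC : IsMatching (edgesIn F C) := hF.subset (edgesIn_subset C)
  obtain ⟨p, hp, hpr, hend⟩ := exists_altPath_getLast_not_covered hN hFC hrF
  have hpC : ∀ x ∈ p, x ∈ C := fun x =>
    hp.mem_of_head_mem (fun e he => (hNC he).2) (fun e he => he.2) (hpr ▸ hr)
  have hlast := hpC _ (List.getLast_mem hp.1)
  have hsub : N \ edgesIn F C ⊆ E \ F := fun e ⟨heN, hnF⟩ =>
    ⟨(hNC heN).1, fun heF => hnF ⟨heF, (hNC heN).2⟩⟩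
  obtain ⟨hodd, hnc⟩ : Odd p.length ∧ ¬ covered N (p.getLast hp.1) := by
    refine hend.resolve_right fun ⟨⟨n, hn⟩, hnc⟩ => ?_
    by_cases hlr : p.getLast hp.1 = r
    · rw [← hpr, List.getLast_eq_getElem, List.head_eq_getElem] at hlr
      have := hp.getElem_inj hlr
      have := List.length_pos_iff.2 hp.1
      omega
    · exact hnc (hcov _ hlast hlr)
  refine ⟨p, (hp.diff_of_not_covered hFC (hpr ▸ hrF)).mono hsub (edgesIn_subset C), hpr, ?_,
    hodd, hpC⟩
  by_contra hne
  exact hnc (hNcov _ hlast hne)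

namespace IsGE

variable {E : Set (Sym2 V)} {Q R S : Set V} {u v w : V}

local notation "𝒞" => comp (avoid E S)

theorem notMem_S (hGE : IsGE E F Q R S) (hv : v ∈ R) : v ∉ S :=
  Set.disjoint_left.1 hGE.2.2.2.1 hv

theorem comp_subset (hGE : IsGE E F Q R S) (hv : v ∈ R) : 𝒞 v ⊆ R :=
  (hGE.2.2.2.2.2.1 v hv).1

theorem hypomatchable (hGE : IsGE E F Q R S) (hv : v ∈ R) : Hypomatchable E (𝒞 v) :=
  (hGE.2.2.2.2.2.1 v hv).2.1

theorem exposed_unique (hGE : IsGE E F Q R S) (hv : v ∈ R)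
    (hu : u ∈ 𝒞 v) (hu' : ¬ covered (edgesIn F (𝒞 v)) u)
    (hw : w ∈ 𝒞 v) (hw' : ¬ covered (edgesIn F (𝒞 v)) w) : u = w :=
  (hGE.2.2.2.2.2.1 v hv).2.2.unique ⟨hu, hu'⟩ ⟨hw, hw'⟩

theorem exists_partner (hGE : IsGE E F Q R S) (hs : v ∈ S) :
    ∃ t, s(v, t) ∈ F ∧ t ∈ R ∧ ¬ covered (edgesIn F (𝒞 t)) t :=
  hGE.2.2.2.2.2.2 v hs

theorem mem_R_of_not_covered (hGE : IsGE E F Q R S) (ha : ¬ covered F v) : v ∈ R := by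
  have hv : v ∈ Q ∪ R ∪ S := hGE.1 ▸ Set.mem_univ v
  rcases hv with (hQ | hR) | hS
  · exact absurd (covered_mono (edgesIn_subset Q) (hGE.2.2.2.2.1 v hQ)) ha
  · exact hR
  · obtain ⟨t, ht, -⟩ := hGE.exists_partner hS
    exact absurd (covered_iff_exists.2 ⟨t, ht⟩) ha

theorem mem_comp_of_edge_of_notMem (hGE : IsGE E F Q R S) (hv : v ∈ R) (he : s(v, w) ∈ E)
    (hw : w ∉ S) : w ∈ 𝒞 v :=
  mem_comp_of_edge (mem_comp_self _ v) ⟨he, by simp [hGE.notMem_S hv, hw]⟩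

theorem altPath_invariant (hGE : IsGE E F Q R S) (hF : IsMatching F)
    (hp : AltPath (E \ F) F p) (ha : ¬ covered F (p.head hp.1)) :
    ∀ i (hi : i < p.length), (Even i → p[i] ∈ R) ∧
      (Odd i → p[i] ∈ S ∨ p[i] ∈ R ∧ covered (edgesIn F (𝒞 p[i])) p[i]) ∧
      (p[i] ∈ R → ∃ j ≤ i, ∃ hj : j < p.length,
        p[j] ∈ 𝒞 p[i] ∧ ¬ covered (edgesIn F (𝒞 p[i])) p[j]) := by
  intro i
  induction i with
  | zero =>
    intro hi
    have ha' : ¬ covered F p[0] := by rwa [List.head_eq_getElem] at ha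
    exact ⟨fun _ => hGE.mem_R_of_not_covered ha', fun h => absurd h (by simp),
      fun _ => ⟨0, le_rfl, hi, mem_comp_self _ _, fun h => ha' (covered_mono (edgesIn_subset _) h)⟩⟩
  | succ i ih =>
    intro hi
    obtain ⟨hR, hSR, hroot⟩ := ih (by omega)
    rcases Nat.even_or_odd i with hie | hio
    · have hu := hR hie
      have he := hp.edge_mem_of_even hi hie
      obtain ⟨j, hji, hj, hjC, hjexp⟩ := hroot hu
      have hcomp : p[i + 1] ∉ S → 𝒞 p[i + 1] = 𝒞 p[i] :=
        fun hw => comp_eq_of_mem (hGE.mem_comp_of_edge_of_notMem hu he.1 hw)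
      refine ⟨fun h => absurd h (Nat.not_even_iff_odd.2 hie.add_one), fun _ => ?_, fun hw => ?_⟩
      · by_cases hw : p[i + 1] ∈ S
        · exact .inl hw
        · rw [hcomp hw]
          refine .inr ⟨hGE.comp_subset hu (hcomp hw ▸ mem_comp_self _ _), by_contra fun hc => ?_⟩
          have := hp.getElem_inj
            (hGE.exposed_unique hu hjC hjexp (hcomp hw ▸ mem_comp_self _ _) hc)
          omega
      · rw [hcomp (hGE.notMem_S hw)]
        exact ⟨j, by omega, hj, hjC, hjexp⟩
    · have he := hp.edge_mem_of_odd hi hio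
      refine ⟨fun _ => ?_, fun h => absurd h (Nat.not_odd_iff_even.2 hio.add_one), fun _ => ?_⟩ <;>
        rcases hSR hio with hS | ⟨hu, hcov⟩
      · obtain ⟨t, ht, htR, -⟩ := hGE.exists_partner hS
        rwa [hF.eq_of_mem he ht]
      · exact hGE.comp_subset hu (mem_of_covered_edgesIn hF hcov he)
      · obtain ⟨t, ht, -, htexp⟩ := hGE.exists_partner hS
        have hw := hF.eq_of_mem he ht
        exact ⟨i + 1, le_rfl, hi, mem_comp_self _ _, by rwa [hw]⟩
      · obtain ⟨j, hji, hj, hjC, hjexp⟩ := hroot hu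
        rw [comp_eq_of_mem (mem_of_covered_edgesIn hF hcov he)]
        exact ⟨j, by omega, hj, hjC, hjexp⟩

theorem ERset_subset (hGE : IsGE E F Q R S) (hF : IsMatching F) : ERset (E \ F) F ⊆ R := by
  intro x hx
  obtain ⟨p, hp, ha, rfl, ⟨n, hn⟩⟩ := exists_altPath_of_mem_ERset hx
  rw [List.getLast_eq_getElem]
  exact (hGE.altPath_invariant hF hp ha _ _).1 ⟨n, by omega⟩

theorem ORset_subset (hGE : IsGE E F Q R S) (hF : IsMatching F) :
    ORset (E \ F) F ⊆ S ∪ {v ∈ R | covered (edgesIn F (𝒞 v)) v} := by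
  intro x hx
  obtain ⟨p, hp, ha, rfl, ⟨n, hn⟩⟩ := exists_altPath_of_mem_ORset hx
  have hpos := List.length_pos_iff.2 hp.1
  rw [List.getLast_eq_getElem]
  exact (hGE.altPath_invariant hF hp ha _ _).2.1 ⟨n - 1, by omega⟩

theorem mem_ORset_of_edge (hGE : IsGE E F Q R S) (hF : IsMatching F)
    (hu : u ∈ ERset (E \ F) F) (he : s(u, w) ∈ E \ F) (hw : w ∈ S) : w ∈ ORset (E \ F) F := by
  obtain ⟨p, hp, ha, rfl, hodd⟩ := exists_altPath_of_mem_ERset hu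
  by_cases hwp : w ∈ p
  · obtain ⟨j, hj, rfl⟩ := List.getElem_of_mem hwp
    refine mem_ORset_of_getElem hp ha hj ((Nat.even_or_odd j).resolve_left fun hje => ?_)
    exact hGE.notMem_S ((hGE.altPath_invariant hF hp ha j hj).1 hje) hw
  · exact mem_ORset_of_getLast_edge hp ha hodd hwp he

theorem exists_exposed_mem_ERset (hGE : IsGE E F Q R S) (hF : IsMatching F) (hv : v ∈ R)
    (hvE : v ∈ ERset (E \ F) F) :
    ∃ r ∈ 𝒞 v, ¬ covered (edgesIn F (𝒞 v)) r ∧ r ∈ ERset (E \ F) F := by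
  obtain ⟨p, hp, ha, rfl, -⟩ := exists_altPath_of_mem_ERset hvE
  rw [List.getLast_eq_getElem] at hv ⊢
  have hinv := hGE.altPath_invariant hF hp ha
  obtain ⟨j, -, hj, hjC, hjexp⟩ := (hinv _ _).2.2 hv
  refine ⟨p[j], hjC, hjexp, mem_ERset_of_getElem hp ha hj
    ((Nat.even_or_odd j).resolve_right fun hjo => ?_)⟩
  rcases (hinv j hj).2.1 hjo with hS | ⟨-, hcov⟩
  · exact hGE.notMem_S (hGE.comp_subset hv hjC) hS
  · exact hjexp (comp_eq_of_mem hjC ▸ hcov)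

theorem eq_getLast_of_mem_comp (hGE : IsGE E F Q R S) (hF : IsMatching F)
    (hp : AltPath (E \ F) F p) (ha : ¬ covered F (p.head hp.1)) (hr : p.getLast hp.1 ∈ R)
    (hexp : ¬ covered (edgesIn F (𝒞 (p.getLast hp.1))) (p.getLast hp.1)) {x : V} (hx : x ∈ p)
    (hxC : x ∈ 𝒞 (p.getLast hp.1)) : x = p.getLast hp.1 := by
  obtain ⟨k, hk, rfl⟩ := List.getElem_of_mem hx
  obtain ⟨j, hjk, hj, hjC, hjexp⟩ :=
    (hGE.altPath_invariant hF hp ha k hk).2.2 (hGE.comp_subset hr hxC)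
  rw [comp_eq_of_mem hxC] at hjC hjexp
  have hjL := hGE.exposed_unique hr hjC hjexp (mem_comp_self _ _) hexp
  rw [List.getLast_eq_getElem] at hjL ⊢
  have := hp.getElem_inj hjL
  congr 1
  omega

theorem comp_subset_ERset [Finite V] (hGE : IsGE E F Q R S) (hF : IsMatching F) (hv : v ∈ R)
    (hvE : v ∈ ERset (E \ F) F) : 𝒞 v ⊆ ERset (E \ F) F := by
  obtain ⟨r, hrC, hrexp, hrE⟩ := hGE.exists_exposed_mem_ERset hF hv hvE
  have hr : r ∈ R := hGE.comp_subset hv hrC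
  rw [← comp_eq_of_mem hrC] at hrexp ⊢
  obtain ⟨p, hp, ha, rfl, hodd⟩ := exists_altPath_of_mem_ERset hrE
  intro x hx
  have hcov : ∀ u ∈ 𝒞 (p.getLast hp.1), u ≠ p.getLast hp.1 →
      covered (edgesIn F (𝒞 (p.getLast hp.1))) u := fun u hu hur =>
    by_contra fun hc => hur (hGE.exposed_unique hr hu hc (mem_comp_self _ _) hrexp)
  obtain ⟨q, hq, hqr, rfl, hqodd, hqC⟩ :=
    (hGE.hypomatchable hr).exists_altPath hF (mem_comp_self _ _) hrexp hcov hx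
  obtain ⟨r', q, rfl⟩ := List.exists_cons_of_ne_nil hq.1
  obtain rfl : r' = p.getLast hp.1 := hqr
  refine mem_ERset_of_append hp ha hodd hq (fun y hy hyq => ?_)
    (by simpa [Nat.odd_add_one] using hqodd)
  have := hGE.eq_getLast_of_mem_comp hF hp ha hr hrexp hy (hqC y (List.mem_cons_of_mem _ hyq))
  exact (List.nodup_cons.1 hq.2.1).1 (this ▸ hyq)

theorem notMem_ERset_of_mem_comp [Finite V] (hGE : IsGE E F Q R S) (hF : IsMatching F)
    (hv : v ∈ R) (hvE : v ∉ ERset (E \ F) F) {u : V} (hu : u ∈ 𝒞 v) : u ∉ ERset (E \ F) F :=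
  fun huE => hvE (hGE.comp_subset_ERset hF (hGE.comp_subset hv hu) huE (mem_comp_symm hu))

theorem comp_avoid_inter_ORset [Finite V] (hGE : IsGE E F Q R S) (hF : IsMatching F)
    (hv : v ∈ R) (hvE : v ∈ ERset (E \ F) F) :
    comp (avoid E (S ∩ ORset (E \ F) F)) v = 𝒞 v := by
  refine (comp_subset_of_closed (mem_comp_self _ v) fun x hx y hxy => ?_).antisymm
    (comp_mono fun e ⟨he, h⟩ => ⟨he, fun u hu hu' => h u hu hu'.1⟩)
  by_cases hyS : y ∈ S
  · have hxE := hGE.comp_subset_ERset hF hv hvE hx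
    have hyO : y ∈ ORset (E \ F) F := by
      by_cases hxyF : s(x, y) ∈ F
      · exact mem_ORset_of_mem_ERset hF (Sym2.eq_swap ▸ hxyF) hxE
      · exact hGE.mem_ORset_of_edge hF hxE ⟨hxy.1, hxyF⟩ hyS
    exact absurd ⟨hyS, hyO⟩ (hxy.2 y (Sym2.mem_mk_right x y))
  · rw [← comp_eq_of_mem hx]
    exact hGE.mem_comp_of_edge_of_notMem (hGE.comp_subset hv hx) hxy.1 hyS

theorem covered_edgesIn_unreached [Finite V] (hGE : IsGE E F Q R S) (hFE : F ⊆ E)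
    (hF : IsMatching F) (hv : v ∈ Q ∪ (R \ ERset (E \ F) F) ∪ (S \ ORset (E \ F) F)) :
    covered (edgesIn F (Q ∪ (R \ ERset (E \ F) F) ∪ (S \ ORset (E \ F) F))) v := by
  rcases hv with (hvQ | ⟨hvR, hvE⟩) | ⟨hvS, hvO⟩
  · exact covered_mono (edgesIn_mono (by tauto_set)) (hGE.2.2.2.2.1 v hvQ)
  · by_cases hc : covered (edgesIn F (𝒞 v)) v
    · refine covered_mono (edgesIn_mono fun x hx => ?_) hc
      exact .inl (.inr ⟨hGE.comp_subset hvR hx, hGE.notMem_ERset_of_mem_comp hF hvR hvE hx⟩)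
    obtain ⟨w, hw⟩ := covered_iff_exists.1
      (not_not.1 (mt mem_ERset_of_not_covered hvE) : covered F v)
    have hwS : w ∈ S := by_contra fun hwS =>
      hc (covered_iff_exists.2 ⟨w, mem_edgesIn.2 ⟨hw, mem_comp_self _ v,
        hGE.mem_comp_of_edge_of_notMem hvR (hFE hw) hwS⟩⟩)
    have hwO : w ∉ ORset (E \ F) F :=
      fun hwO => hvE (mem_ERset_of_mem_ORset hF (Sym2.eq_swap ▸ hw) hwO)
    exact covered_iff_exists.2 ⟨w, mem_edgesIn.2 ⟨hw, .inl (.inr ⟨hvR, hvE⟩), .inr ⟨hwS, hwO⟩⟩⟩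
  · obtain ⟨t, ht, htR, -⟩ := hGE.exists_partner hvS
    have htE : t ∉ ERset (E \ F) F := fun htE => hvO (mem_ORset_of_mem_ERset hF ht htE)
    exact covered_iff_exists.2 ⟨t, mem_edgesIn.2 ⟨ht, .inr ⟨hvS, hvO⟩, .inl (.inr ⟨htR, htE⟩)⟩⟩

theorem inter_ERset_ORset [Finite V] (hGE : IsGE E F Q R S) (hFE : F ⊆ E) (hF : IsMatching F) :
    IsGE E F (Q ∪ (R \ ERset (E \ F) F) ∪ (S \ ORset (E \ F) F)) (R ∩ ERset (E \ F) F)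
      (S ∩ ORset (E \ F) F) := by
  obtain ⟨hU, hQR, hQS, hRS, -, hcomp, -⟩ := id hGE
  refine ⟨?_, ?_, ?_, ?_, ?_, fun v ⟨hv, hvE⟩ => ?_, fun s ⟨hs, hsO⟩ => ?_⟩
  · refine Set.eq_univ_of_forall fun x => ?_
    have hx : x ∈ Q ∪ R ∪ S := hU ▸ Set.mem_univ x
    simp only [Set.mem_union, Set.mem_sdiff, Set.mem_inter_iff] at hx ⊢
    tauto
  · tauto_set
  · tauto_set
  · tauto_set
  · exact fun v hv => hGE.covered_edgesIn_unreached hFE hF hv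
  · rw [hGE.comp_avoid_inter_ORset hF hv hvE]
    exact ⟨fun x hx => ⟨hGE.comp_subset hv hx, hGE.comp_subset_ERset hF hv hvE hx⟩,
      (hcomp v hv).2⟩
  · obtain ⟨t, ht, htR, htexp⟩ := hGE.exists_partner hs
    have htE := mem_ERset_of_mem_ORset hF ht hsO
    exact ⟨t, ht, ⟨htR, htE⟩, by rwa [hGE.comp_avoid_inter_ORset hF htR htE]⟩

end IsGE

theorem stmt_13_general {V : Type*} [Fintype V] (E F : Set (Sym2 V)) (Q R S : Set V)
    (hF : IsMaxMatching E F) (hGE : IsGE E F Q R S)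
    (hmax : ∀ Q' R' S' : Set V, IsGE E F Q' R' S' → ¬ Q ⊂ Q') :
    ERset (E \ F) F = R ∧
    ORset (E \ F) F = S ∪ {v ∈ R | covered (edgesIn F (comp (avoid E S) v)) v} := by
  obtain ⟨hFE, hFm, -⟩ := hF
  have hRE : R ⊆ ERset (E \ F) F := fun v hv => by_contra fun hvE =>
    hmax _ _ _ (hGE.inter_ERset_ORset hFE hFm) <|
      (Set.ssubset_iff_of_subset (fun x hx => .inl (.inl hx))).2
        ⟨v, .inl (.inr ⟨hv, hvE⟩), fun hvQ => Set.disjoint_left.1 hGE.2.1 hvQ hv⟩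
  refine ⟨(hGE.ERset_subset hFm).antisymm hRE, (hGE.ORset_subset hFm).antisymm ?_⟩
  rintro x (hxS | ⟨hxR, hcov⟩)
  · obtain ⟨t, ht, htR, -⟩ := hGE.exists_partner hxS
    exact mem_ORset_of_mem_ERset hFm ht (hRE htR)
  · obtain ⟨w, hw⟩ := covered_iff_exists.1 hcov
    exact mem_ORset_of_mem_ERset hFm (edgesIn_subset _ hw)
      (hRE (hGE.comp_subset hxR (mem_edgesIn.1 hw).2.2))

/-- if `(Q,R,S)` is a Gallai–Edmonds decomposition for the maximum matching `F`
in which `Q` is maximal under containment, then `ER(K,F) = ⋃ V(H_i) = R` and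
`OR(K,F) = S ∪ ⋃ (V(H_i) \ {r_i})`, where `K = E \ F`. -/
theorem stmt_13 {V : Type*} [Fintype V] (E F : Set (Sym2 V)) (Q R S : Set V)
    (hE : ∀ e ∈ E, ¬ e.IsDiag) (hF : IsMaxMatching E F) (hGE : IsGE E F Q R S)
    (hmax : ∀ Q' R' S' : Set V, IsGE E F Q' R' S' → ¬ Q ⊂ Q') :
    ERset (E \ F) F = R ∧
    ORset (E \ F) F = S ∪ {v ∈ R | covered (edgesIn F (comp (avoid E S) v)) v} :=
  stmt_13_general E F Q R S hF hGE hmax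
end

section
/- For every even n ≥ 2 there exists a family of 2n−1 matchings, each of size n, in a (non-bipartite) graph with no rainbow matching of size n: take n−1 copies of each of the two perfect matchings of the cycle C_{2n}, together with one matching of size n on the vertices of C_{2n} all of whose pairs v_i v_j have j − i even. -/
variable {V : Type*}

/-- A rainbow matching of size `n` for a family `M` of edge sets: `n` edges, one from each of
`n` distinct members of the family, forming a matching. -/
def HasRainbow {V : Type*} [DecidableEq V] {m : ℕ} (n : ℕ) (M : Fin m → Finset (Sym2 V)) :
    Prop :=
  ∃ (f : Fin n → Fin m) (e : Fin n → Sym2 V),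
    Function.Injective f ∧ (∀ j, e j ∈ M (f j)) ∧ Function.Injective e ∧
    IsMatching ((Finset.image e Finset.univ : Finset (Sym2 V)) : Set (Sym2 V))

/-- The edge set of the cycle on the `n` vertices `ZMod n` (vertices in cyclic order). -/
def cycleEdges (n : ℕ) : Finset (Sym2 (ZMod n)) :=
  (Finset.range n).image fun i : ℕ => s((i : ZMod n), (i : ZMod n) + 1)

/-! A rainbow matching of size `n` on the `2n` vertices of `ZMod (2 * n)` is perfect. It cannot
use a chord `s(a, a + 2)` of the last matching: all its other edges are cycle edges, and a cycle
edge covering `a + 1` meets `a` or `a + 2`. So it is a perfect matching of the cycle, and since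
an edge `s(u, u + 1)` forces `s(u + 2, u + 3)` (the only free way to cover `u + 2`), it is one
of the two perfect matchings of the cycle. Its `n` edges then come from only `n - 1` members of
the family. -/
open Finset

section Matching

variable [DecidableEq V]

theorem IsMatching.covered_of_card_le [Fintype V] {E : Finset (Sym2 V)}
    (hE : IsMatching (E : Set (Sym2 V))) (hcard : Fintype.card V ≤ 2 * #E) (v : V) :
    covered (E : Set (Sym2 V)) v := by
  have hdisj : (E : Set (Sym2 V)).PairwiseDisjoint Sym2.toFinset := by
    intro e he e' he' hne
    exact disjoint_left.2 fun x hx hx' =>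
      hE.2 e he e' he' hne x (Sym2.mem_toFinset.1 hx) (Sym2.mem_toFinset.1 hx')
  have hcover : E.biUnion Sym2.toFinset = univ := by
    refine eq_univ_of_card _ (le_antisymm (card_le_univ _) ?_)
    rw [card_biUnion hdisj,
      sum_congr rfl fun e he => Sym2.card_toFinset_of_not_isDiag e (hE.1 e he), sum_const,
      smul_eq_mul, mul_comm]
    exact hcard
  obtain ⟨e, he, hv⟩ := mem_biUnion.1 (hcover ▸ mem_univ v)
  exact ⟨e, he, Sym2.mem_toFinset.1 hv⟩

variable {ι : Type*} {s : Finset ι} {p q : ι → V}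

theorem isMatching_image_mk (hne : ∀ i ∈ s, p i ≠ q i)
    (hdisj : ∀ i ∈ s, ∀ j ∈ s, ∀ v ∈ s(p i, q i), v ∈ s(p j, q j) → i = j) :
    IsMatching (s.image (fun i => s(p i, q i)) : Set (Sym2 V)) := by
  refine ⟨?_, ?_⟩
  · simp only [coe_image, Set.forall_mem_image, Sym2.mk_isDiag_iff]
    exact hne
  · simp only [coe_image, Set.forall_mem_image]
    intro i hi j hj hne v hv hv'
    exact hne (by rw [hdisj i hi j hj v hv hv'])

theorem card_image_mk
    (hdisj : ∀ i ∈ s, ∀ j ∈ s, ∀ v ∈ s(p i, q i), v ∈ s(p j, q j) → i = j) :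
    #(s.image fun i => s(p i, q i)) = #s :=
  card_image_of_injOn fun i hi j hj hij =>
    hdisj i hi j hj (p i) (Sym2.mem_mk_left _ _) (hij ▸ Sym2.mem_mk_left _ _)

end Matching

section Cycle

variable {R : Type*} [AddGroupWithOne R] {E : Set (Sym2 R)}

theorem one_ne_zero_of_two_ne_zero (h2 : (2 : R) ≠ 0) : (1 : R) ≠ 0 := by
  rintro h
  exact h2 (by rw [← one_add_one_eq_two, h, add_zero])

theorem IsMatching.mk_add_one_add_two_notMem (h2 : (2 : R) ≠ 0) (hE : IsMatching E) {u : R}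
    (hu : s(u, u + 1) ∈ E) : s(u + 1, u + 2) ∉ E := by
  intro hu'
  refine hE.2 _ hu _ hu' ?_ (u + 1) (Sym2.mem_mk_right _ _) (Sym2.mem_mk_left _ _)
  rw [Ne, Sym2.eq_iff]
  rintro (⟨h, -⟩ | ⟨h, -⟩)
  · exact one_ne_zero_of_two_ne_zero h2 (by simpa using h)
  · exact h2 (by simpa using h)

theorem IsMatching.mk_add_even_mem (h2 : (2 : R) ≠ 0) (hE : IsMatching E)
    (hcov : ∀ v, covered E v) (hcyc : ∀ e ∈ E, ∃ w, e = s(w, w + 1)) {u : R}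
    (hu : s(u, u + 1) ∈ E) (k : ℕ) : s(u + (2 * k : ℕ), u + (2 * k : ℕ) + 1) ∈ E := by
  induction k with
  | zero => simpa using hu
  | succ k ih =>
    rw [Nat.mul_succ, Nat.cast_add, Nat.cast_ofNat, ← add_assoc]
    generalize u + ((2 * k : ℕ) : R) = x at ih ⊢
    obtain ⟨e, he, hv⟩ := hcov (x + 2)
    obtain ⟨w, rfl⟩ := hcyc e he
    rcases Sym2.mem_iff.1 hv with h | h
    · rwa [h]
    · have hw : w = x + 1 := by
        rwa [← one_add_one_eq_two, ← add_assoc, add_left_inj, eq_comm] at h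
      subst hw
      rw [add_assoc, one_add_one_eq_two] at he
      exact absurd he (hE.mk_add_one_add_two_notMem h2 ih)

theorem IsMatching.mk_add_two_notMem (h1 : (1 : R) ≠ 0) (hE : IsMatching E)
    (hcov : ∀ v, covered E v) {a : R}
    (hcyc : ∀ e ∈ E, e ≠ s(a, a + 2) → ∃ w, e = s(w, w + 1)) :
    s(a, a + 2) ∉ E := by
  intro ha
  have h21 : a + 2 = a + 1 + 1 := by rw [add_assoc, one_add_one_eq_two]
  have hne1 : a + 1 ≠ a := by simpa using h1
  have hne2 : a + 1 ≠ a + 2 := by rw [h21]; simpa using h1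
  obtain ⟨e, he, hv⟩ := hcov (a + 1)
  have hne : e ≠ s(a, a + 2) := by
    rintro rfl
    exact (Sym2.mem_iff.1 hv).elim hne1 hne2
  obtain ⟨w, rfl⟩ := hcyc e he hne
  rcases Sym2.mem_iff.1 hv with rfl | h
  · exact hE.2 _ he _ ha hne (a + 2) (h21 ▸ Sym2.mem_mk_right _ _) (Sym2.mem_mk_right _ _)
  · obtain rfl : w = a := (add_left_inj 1).1 h.symm
    exact hE.2 _ he _ ha hne w (Sym2.mem_mk_left _ _) (Sym2.mem_mk_left _ _)

end Cycle

theorem ZMod.natCast_inj_of_lt {m a b : ℕ} (ha : a < m) (hb : b < m) :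
    (a : ZMod m) = b ↔ a = b := by
  rw [ZMod.natCast_eq_natCast_iff', Nat.mod_eq_of_lt ha, Nat.mod_eq_of_lt hb]

theorem ZMod.mod_two_eq_of_natCast_eq {n a b : ℕ} (h : (a : ZMod (2 * n)) = b) :
    a % 2 = b % 2 := by
  rw [ZMod.natCast_eq_natCast_iff'] at h
  rw [← Nat.mod_mod_of_dvd a (dvd_mul_right 2 n), h, Nat.mod_mod_of_dvd b (dvd_mul_right 2 n)]

theorem ZMod.natCast_ne_natCast_add_one {n a b : ℕ} (h : a % 2 = b % 2) :
    (a : ZMod (2 * n)) ≠ b + 1 := fun h' => by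
  have := ZMod.mod_two_eq_of_natCast_eq (h'.trans (Nat.cast_succ b).symm)
  omega

theorem ZMod.two_ne_zero_of_two_lt {m : ℕ} (hm : 2 < m) : (2 : ZMod m) ≠ 0 := by
  rw [← Nat.cast_ofNat, Ne, ZMod.natCast_eq_zero_iff]
  exact fun h => absurd (Nat.le_of_dvd two_pos h) (by omega)

theorem IsMatching.exists_eq_add_even {m : ℕ} (hm : 2 < m) {E : Set (Sym2 (ZMod m))}
    (hE : IsMatching E) (hcov : ∀ v, covered E v) (hcyc : ∀ e ∈ E, ∃ w, e = s(w, w + 1))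
    {u w : ZMod m} (hu : s(u, u + 1) ∈ E) (hw : s(w, w + 1) ∈ E) :
    ∃ k : ℕ, w = u + (2 * k : ℕ) := by
  have : NeZero m := ⟨by omega⟩
  have h2 := ZMod.two_ne_zero_of_two_lt hm
  obtain ⟨a, ha⟩ := ZMod.natCast_zmod_surjective (w - u)
  have hwu : w = u + a := by rw [ha, add_sub_cancel]
  obtain ⟨k, rfl | rfl⟩ := Nat.even_or_odd' a
  · exact ⟨k, hwu⟩
  · rw [hwu, Nat.cast_succ, ← add_assoc, add_assoc _ 1 1, one_add_one_eq_two] at hw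
    exact absurd hw (hE.mk_add_one_add_two_notMem h2 (hE.mk_add_even_mem h2 hcov hcyc hu k))

theorem ZMod.eq_of_mem_mk_natCast_add_one {n x y : ℕ} (hx : x < 2 * n) (hy : y < 2 * n)
    (hxy : x % 2 = y % 2) {v : ZMod (2 * n)} (hv : v ∈ s((x : ZMod (2 * n)), x + 1))
    (hv' : v ∈ s((y : ZMod (2 * n)), y + 1)) : x = y := by
  rcases Sym2.mem_iff.1 hv with rfl | rfl <;> rcases Sym2.mem_iff.1 hv' with h | h
  · exact (ZMod.natCast_inj_of_lt hx hy).1 h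
  · exact absurd h (ZMod.natCast_ne_natCast_add_one hxy)
  · exact absurd h.symm (ZMod.natCast_ne_natCast_add_one hxy.symm)
  · exact (ZMod.natCast_inj_of_lt hx hy).1 (add_right_cancel h)

theorem mk_natCast_mem_cycleEdges {m : ℕ} (hm : 0 < m) (x : ℕ) :
    s((x : ZMod m), (x : ZMod m) + 1) ∈ cycleEdges m :=
  mem_image.2 ⟨x % m, mem_range.2 (Nat.mod_lt x hm), by rw [ZMod.natCast_mod]⟩

def cycleMatching (n c : ℕ) : Finset (Sym2 (ZMod (2 * n))) :=
  (range n).image fun k =>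
    s(((2 * k + c : ℕ) : ZMod (2 * n)), ((2 * k + c : ℕ) : ZMod (2 * n)) + 1)

section CycleMatching

variable {n c : ℕ}

theorem mem_cycleMatching {e : Sym2 (ZMod (2 * n))} :
    e ∈ cycleMatching n c ↔ ∃ k < n,
      s(((2 * k + c : ℕ) : ZMod (2 * n)), ((2 * k + c : ℕ) : ZMod (2 * n)) + 1) = e := by
  simp [cycleMatching]

theorem exists_eq_mk_add_one_of_mem_cycleMatching {e : Sym2 (ZMod (2 * n))}
    (he : e ∈ cycleMatching n c) : ∃ w, e = s(w, w + 1) := by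
  obtain ⟨k, -, rfl⟩ := mem_cycleMatching.1 he
  exact ⟨_, rfl⟩

theorem cycleMatching_subset_cycleEdges : cycleMatching n c ⊆ cycleEdges (2 * n) := by
  intro e he
  obtain ⟨k, hk, rfl⟩ := mem_cycleMatching.1 he
  exact mk_natCast_mem_cycleEdges (by omega) _

theorem cycleMatching_pairwise (hc : c < 2) : ∀ k ∈ range n, ∀ k' ∈ range n,
    ∀ v ∈ s(((2 * k + c : ℕ) : ZMod (2 * n)), ((2 * k + c : ℕ) : ZMod (2 * n)) + 1),
    v ∈ s(((2 * k' + c : ℕ) : ZMod (2 * n)), ((2 * k' + c : ℕ) : ZMod (2 * n)) + 1) →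
    k = k' := by
  intro k hk k' hk' _ hv hv'
  rw [mem_range] at hk hk'
  have := ZMod.eq_of_mem_mk_natCast_add_one (by omega) (by omega) (by omega) hv hv'
  omega

theorem isMatching_cycleMatching (hc : c < 2) :
    IsMatching (cycleMatching n c : Set (Sym2 (ZMod (2 * n)))) :=
  isMatching_image_mk (fun _ _ => ZMod.natCast_ne_natCast_add_one rfl) (cycleMatching_pairwise hc)

theorem card_cycleMatching (hc : c < 2) : #(cycleMatching n c) = n := by
  rw [cycleMatching, card_image_mk (cycleMatching_pairwise hc), card_range]

end CycleMatching

/-- The chords `s(4q, 4q + 2)` and `s(4q + 1, 4q + 3)` for `q < n / 2`; when `n` is even they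
stay below `2n`, so none wraps around the cycle. -/
def evenChordMatching (n : ℕ) : Finset (Sym2 (ZMod (2 * n))) :=
  (range n).image fun i =>
    s(((4 * (i / 2) + i % 2 : ℕ) : ZMod (2 * n)),
      ((4 * (i / 2) + i % 2 + 2 : ℕ) : ZMod (2 * n)))

section EvenChordMatching

variable {n : ℕ}

theorem exists_eq_mk_add_two_of_mem_evenChordMatching {e : Sym2 (ZMod (2 * n))}
    (he : e ∈ evenChordMatching n) : ∃ a, e = s(a, a + 2) := by
  obtain ⟨i, -, rfl⟩ := mem_image.1 he
  exact ⟨_, by push_cast; rfl⟩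

theorem evenChordMatching_pairwise (hev : Even n) : ∀ i ∈ range n, ∀ j ∈ range n,
    ∀ v ∈ s(((4 * (i / 2) + i % 2 : ℕ) : ZMod (2 * n)),
      ((4 * (i / 2) + i % 2 + 2 : ℕ) : ZMod (2 * n))),
    v ∈ s(((4 * (j / 2) + j % 2 : ℕ) : ZMod (2 * n)),
      ((4 * (j / 2) + j % 2 + 2 : ℕ) : ZMod (2 * n))) → i = j := by
  obtain ⟨m, rfl⟩ := hev
  intro i hi j hj v hv hv'
  rw [mem_range] at hi hj
  rcases Sym2.mem_iff.1 hv with rfl | rfl <;> rcases Sym2.mem_iff.1 hv' with h | h <;>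
    have := (ZMod.natCast_inj_of_lt (by omega) (by omega)).1 h <;> omega

theorem isMatching_evenChordMatching (hev : Even n) :
    IsMatching (evenChordMatching n : Set (Sym2 (ZMod (2 * n)))) := by
  refine isMatching_image_mk (fun i hi h => ?_) (evenChordMatching_pairwise hev)
  obtain ⟨m, rfl⟩ := hev
  rw [mem_range] at hi
  have := (ZMod.natCast_inj_of_lt (by omega) (by omega)).1 h
  omega

theorem card_evenChordMatching (hev : Even n) : #(evenChordMatching n) = n := by
  rw [evenChordMatching, card_image_mk (evenChordMatching_pairwise hev), card_range]

theorem evenChordMatching_chords (hev : Even n) :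
    ∀ e ∈ evenChordMatching n, ∃ a b : ℕ, a < b ∧ b < 2 * n ∧ Even (b - a) ∧
      e = s((a : ZMod (2 * n)), (b : ZMod (2 * n))) := by
  obtain ⟨m, rfl⟩ := hev
  intro e he
  obtain ⟨i, hi, rfl⟩ := mem_image.1 he
  exact ⟨_, _, by omega, by simp at hi; omega, ⟨1, by omega⟩, rfl⟩

end EvenChordMatching

def cycleChordFamily (n : ℕ) (i : Fin (2 * n - 1)) : Finset (Sym2 (ZMod (2 * n))) :=
  if (i : ℕ) < 2 * n - 2 then cycleMatching n (if (i : ℕ) < n - 1 then 0 else 1)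
  else evenChordMatching n

theorem le_of_injective_of_forall_mem_Ico {n m a k : ℕ} {f : Fin n → Fin m}
    (hf : Function.Injective f) (h : ∀ j, (f j : ℕ) ∈ Ico a (a + k)) : n ≤ k := by
  simpa using card_le_card_of_injOn (fun j => (f j : ℕ)) (s := univ) (fun j _ => h j)
    fun _ _ _ _ hjj' => hf (Fin.ext hjj')

section Rainbow

variable {n : ℕ} {f : Fin n → Fin (2 * n - 1)} {e : Fin n → Sym2 (ZMod (2 * n))}

theorem rainbow_avoids_evenChordMatching (hn : 2 ≤ n) (hf : Function.Injective f)
    (hfe : ∀ j, e j ∈ cycleChordFamily n (f j)) (hE : IsMatching (Set.range e))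
    (hcov : ∀ v, covered (Set.range e) v) (j : Fin n) : (f j : ℕ) < 2 * n - 2 := by
  by_contra hj
  obtain ⟨a, ha⟩ := exists_eq_mk_add_two_of_mem_evenChordMatching
    (by simpa [cycleChordFamily, hj] using hfe j)
  refine hE.mk_add_two_notMem (one_ne_zero_of_two_ne_zero (ZMod.two_ne_zero_of_two_lt (by omega)))
    hcov ?_ ⟨j, ha⟩
  rintro _ ⟨j', rfl⟩ hne
  have hj' : (f j' : ℕ) < 2 * n - 2 := by
    have : f j' ≠ f j := fun h => hne (by rw [hf h, ha])
    have := (f j').isLt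
    omega
  exact exists_eq_mk_add_one_of_mem_cycleMatching (by simpa [cycleChordFamily, hj'] using hfe j')

theorem rainbow_same_half (hn : 2 ≤ n) (hf : Function.Injective f)
    (hfe : ∀ j, e j ∈ cycleChordFamily n (f j)) (hE : IsMatching (Set.range e))
    (hcov : ∀ v, covered (Set.range e) v) (j j' : Fin n) :
    (f j : ℕ) < n - 1 ↔ (f j' : ℕ) < n - 1 := by
  have hmem (j : Fin n) : e j ∈ cycleMatching n (if (f j : ℕ) < n - 1 then 0 else 1) := by
    simpa [cycleChordFamily, rainbow_avoids_evenChordMatching hn hf hfe hE hcov j] using hfe j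
  have hcyc : ∀ x ∈ Set.range e, ∃ w, x = s(w, w + 1) := by
    rintro _ ⟨j, rfl⟩
    exact exists_eq_mk_add_one_of_mem_cycleMatching (hmem j)
  obtain ⟨k, -, hk⟩ := mem_cycleMatching.1 (hmem j)
  obtain ⟨k', -, hk'⟩ := mem_cycleMatching.1 (hmem j')
  obtain ⟨m, hm⟩ :=
    hE.exists_eq_add_even (by omega) hcov hcyc ⟨j, hk.symm⟩ ⟨j', hk'.symm⟩
  rw [← Nat.cast_add] at hm
  have := ZMod.mod_two_eq_of_natCast_eq hm
  split_ifs at this <;> omega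

end Rainbow

theorem not_hasRainbow_cycleChordFamily {n : ℕ} (hn : 2 ≤ n) :
    ¬ HasRainbow n (cycleChordFamily n) := by
  rintro ⟨f, e, hf, hfe, he, hE⟩
  have : NeZero (2 * n) := ⟨by omega⟩
  have hcov := hE.covered_of_card_le (by simp [ZMod.card, card_image_of_injective _ he])
  simp only [coe_image, coe_univ, Set.image_univ] at hE hcov
  have hlt := rainbow_avoids_evenChordMatching hn hf hfe hE hcov
  have hhalf := rainbow_same_half hn hf hfe hE hcov ⟨0, by omega⟩
  by_cases h0 : (f ⟨0, by omega⟩ : ℕ) < n - 1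
  · have := le_of_injective_of_forall_mem_Ico (a := 0) (k := n - 1) hf fun j =>
      mem_Ico.2 ⟨by omega, by have := (hhalf j).1 h0; omega⟩
    omega
  · have := le_of_injective_of_forall_mem_Ico (a := n - 1) (k := n - 1) hf fun j =>
      mem_Ico.2 ⟨by have := mt (hhalf j).2 h0; omega, by have := hlt j; omega⟩
    omega

/-- for every even `n ≥ 2` there is a family of `2n − 1` matchings of size `n`
on the vertices of the cycle `C_{2n}` with no rainbow matching of size `n`: `2n − 2` of the
matchings are matchings of the cycle, and the last consists only of pairs `v_a v_b` with
`b − a` even. -/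
theorem stmt_19 (n : ℕ) (hn : 2 ≤ n) (hev : Even n) :
    ∃ M : Fin (2 * n - 1) → Finset (Sym2 (ZMod (2 * n))),
      (∀ i, IsMatching ((M i : Finset (Sym2 (ZMod (2 * n)))) : Set (Sym2 (ZMod (2 * n)))) ∧
        (M i).card = n) ∧
      (∀ i : Fin (2 * n - 1), (i : ℕ) < 2 * n - 2 → M i ⊆ cycleEdges (2 * n)) ∧
      (∀ i : Fin (2 * n - 1), (i : ℕ) = 2 * n - 2 →
        ∀ e ∈ M i, ∃ a b : ℕ, a < b ∧ b < 2 * n ∧ Even (b - a) ∧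
          e = s((a : ZMod (2 * n)), (b : ZMod (2 * n)))) ∧
      ¬ HasRainbow n M := by
  refine ⟨cycleChordFamily n, fun i => ?_, fun i hi => ?_, fun i hi => ?_,
    not_hasRainbow_cycleChordFamily hn⟩
  · unfold cycleChordFamily
    split_ifs
    · exact ⟨isMatching_cycleMatching zero_lt_two, card_cycleMatching zero_lt_two⟩
    · exact ⟨isMatching_cycleMatching one_lt_two, card_cycleMatching one_lt_two⟩
    · exact ⟨isMatching_evenChordMatching hev, card_evenChordMatching hev⟩
  · rw [cycleChordFamily, if_pos hi]
    exact cycleMatching_subset_cycleEdges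
  · rw [cycleChordFamily, if_neg (by omega)]
    exact evenChordMatching_chords hev
end
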